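/- arXiv:math-ph/0701013 — 2 statements merged into one kernel-verified Lean document; each statement's English description precedes it below -/
import Mathlib

section
/- Let n ≥ 1 and let γ_1,...,γ_n be positive reals. Let m_{1},...,m_{n-1}, m_n be integers with m_1 ≥ m_2 ≥ ... ≥ m_n (playing the role of m_{1,n+1} ≥ ... ≥ m_{n,n+1}). Then the nested sum ∑_{k_{n-1}=m_n}^{m_{n-1}} ∑_{k_{n-2}=k_{n-1}}^{m_{n-2}} ... ∑_{k_1=k_2}^{m_1} C(m_1-k_2, m_1-k_1)·C(m_2-k_3, m_2-k_2)···C(m_{n-1}-m_n, m_{n-1}-k_{n-1}) · γ_1^{2(m_1-k_1)} γ_2^{2(k_1-k_2)} ··· γ_n^{2(k_{n-1}-m_n)} equals (γ_1²+γ_2²)^{m_1-m_2} (γ_1²+γ_2²+γ_3²)^{m_2-m_3} ··· (γ_1²+···+γ_n²)^{m_{n-1}-m_n}. -/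
open scoped BigOperators
open Fin.NatCast

noncomputable def nfLHS (n : ℕ) (γ : ℕ → ℝ) (m : ℕ → ℤ) : ℝ :=
  ∑ k ∈ Finset.filter
        (fun k : Fin (n + 1) → ℤ =>
          k ((0 : ℕ) : Fin (n + 1)) = m 1 ∧ k ((n : ℕ) : Fin (n + 1)) = m n ∧
          ∀ i : ℕ, 1 ≤ i → i ≤ n - 1 →
            k (((i + 1 : ℕ)) : Fin (n + 1)) ≤ k ((i : ℕ) : Fin (n + 1)) ∧
            k ((i : ℕ) : Fin (n + 1)) ≤ m i)
        (Finset.Icc (fun _ => m n) (fun _ => m 1)),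
      ((∏ i ∈ Finset.Icc 1 (n - 1),
          (Nat.choose (m i - k (((i + 1 : ℕ)) : Fin (n + 1))).toNat
            (m i - k ((i : ℕ) : Fin (n + 1))).toNat : ℝ)) *
        ∏ i ∈ Finset.Icc 1 n,
          γ i ^ (2 * (k (((i - 1 : ℕ)) : Fin (n + 1)) - k ((i : ℕ) : Fin (n + 1)))))

lemma anti_of_step (g : ℕ → ℤ) (N : ℕ) (h : ∀ i, 1 ≤ i → i < N → g (i + 1) ≤ g i) :
    ∀ a b, 1 ≤ a → a ≤ b → b ≤ N → g b ≤ g a := by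
  intro a b ha hab hbN
  obtain ⟨d, rfl⟩ : ∃ d, b = a + d := ⟨b - a, by omega⟩
  clear hab
  induction d generalizing a with
  | zero => simp
  | succ e ih =>
    have h1 : g (a + e + 1) ≤ g (a + e) := h (a + e) (by omega) (by omega)
    have h2 : g (a + e) ≤ g a := ih a ha (by omega)
    calc g (a + (e + 1)) = g (a + e + 1) := by ring_nf
    _ ≤ g (a + e) := h1
    _ ≤ g a := h2

lemma cast_succ_eq (N i : ℕ) (h : i < N + 1) :
    Fin.castSucc ((i : ℕ) : Fin (N + 1)) = ((i : ℕ) : Fin (N + 2)) := by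
  apply Fin.ext
  rw [Fin.coe_castSucc, Fin.val_cast_of_lt h, Fin.val_cast_of_lt (by omega)]

lemma prod_split (f : ℕ → ℝ) (b c : ℕ) (h : c = b + 1) (hb : 1 ≤ c) :
    ∏ i ∈ Finset.Icc 1 c, f i = (∏ i ∈ Finset.Icc 1 b, f i) * f c := by
  subst h
  exact Finset.prod_Icc_succ_top (by omega) f

lemma peel (p : ℕ) (γ : ℕ → ℝ) (m : ℕ → ℤ)
    (hm : ∀ i, 1 ≤ i → i < p + 3 → m (i + 1) ≤ m i) :
    nfLHS (p + 3) γ m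
      = ∑ t ∈ Finset.Icc (m (p + 3)) (m (p + 2)),
          (Nat.choose (m (p + 2) - m (p + 3)).toNat (m (p + 2) - t).toNat : ℝ) *
            γ (p + 3) ^ (2 * (t - m (p + 3))) *
            nfLHS (p + 2) γ (Function.update m (p + 2) t) := by
  classical
  have manti : ∀ a b, 1 ≤ a → a ≤ b → b ≤ p + 3 → m b ≤ m a := anti_of_step m (p + 3) hm
  have hlastcast : ((p + 3 : ℕ) : Fin (p + 3 + 1)) = Fin.last (p + 3) := by
    apply Fin.ext
    rw [Fin.val_cast_of_lt (by omega), Fin.val_last]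
  rw [nfLHS]
  rw [← Finset.sum_fiberwise_of_maps_to
    (g := fun k : Fin (p + 3 + 1) → ℤ => k ((p + 2 : ℕ) : Fin (p + 3 + 1)))
    (t := Finset.Icc (m (p + 3)) (m (p + 2)))
    (by
      intro k hk
      simp only [Finset.mem_filter, Finset.mem_Icc, Pi.le_def] at hk
      obtain ⟨⟨hlo, hhi⟩, hk0, hklast, hcond⟩ := hk
      have h1 := (hcond (p + 2) (by omega) (by omega)).2
      exact Finset.mem_Icc.2 ⟨hlo _, h1⟩)]
  refine Finset.sum_congr rfl (fun t ht => ?_)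
  rw [Finset.mem_Icc] at ht
  rw [nfLHS, Finset.mul_sum]
  refine Finset.sum_nbij'
    (fun k : Fin (p + 3 + 1) → ℤ => fun j : Fin (p + 2 + 1) => k (Fin.castSucc j))
    (fun k' : Fin (p + 2 + 1) → ℤ => Fin.snoc k' (m (p + 3)))
    ?_ ?_ ?_ ?_ ?_
  · -- forward membership
    intro k hk
    simp only [Finset.mem_filter, Finset.mem_Icc, Pi.le_def] at hk
    obtain ⟨⟨⟨hlo, hhi⟩, hk0, hklast, hcond⟩, hkt⟩ := hk
    have hfwd : ∀ i : ℕ, i < p + 3 →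
        k (Fin.castSucc ((i : ℕ) : Fin (p + 2 + 1))) = k ((i : ℕ) : Fin (p + 3 + 1)) :=
      fun i hi => congrArg k (cast_succ_eq (p + 2) i hi)
    have hchain : ∀ j : Fin (p + 3 + 1), (j : ℕ) ≤ p + 2 → t ≤ k j := by
      intro j hj
      have hjeq : (((j : ℕ) : ℕ) : Fin (p + 3 + 1)) = j := Fin.cast_val_eq_self j
      have ganti := anti_of_step (fun i : ℕ => k ((i : ℕ) : Fin (p + 3 + 1))) (p + 3)
        (fun i h1 h2 => (hcond i h1 (by omega)).1)
      rcases Nat.eq_zero_or_pos (j : ℕ) with h0 | h1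
      · have hkj : k j = m 1 := by rw [← hjeq, h0]; exact hk0
        have := manti 1 (p + 2) (by omega) (by omega) (by omega)
        omega
      · have h2 := ganti (j : ℕ) (p + 2) h1 (by omega) (by omega)
        rw [hjeq] at h2
        rw [← hkt]
        exact h2
    simp only [Finset.mem_filter, Finset.mem_Icc, Pi.le_def]
    refine ⟨⟨fun j => ?_, fun j => ?_⟩, ?_, ?_, ?_⟩
    · rw [Function.update_self]
      exact hchain (Fin.castSucc j) (by rw [Fin.coe_castSucc]; have := j.isLt; omega)
    · rw [Function.update_of_ne (by omega)]
      exact hhi _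
    · rw [Function.update_of_ne (by omega), hfwd 0 (by omega)]
      exact hk0
    · rw [Function.update_self, hfwd (p + 2) (by omega)]
      exact hkt
    · intro i h1 h2
      rw [Function.update_of_ne (by omega), hfwd i (by omega), hfwd (i + 1) (by omega)]
      exact hcond i h1 (by omega)
  · -- backward membership
    intro k' hk'
    simp only [Finset.mem_filter, Finset.mem_Icc, Pi.le_def] at hk'
    obtain ⟨⟨hlo, hhi⟩, hk0, hkn, hcond⟩ := hk'
    simp only [Function.update_self] at hlo hkn
    rw [Function.update_of_ne (by omega)] at hk0
    have hback : ∀ i : ℕ, i < p + 3 →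
        (Fin.snoc k' (m (p + 3)) : Fin (p + 3 + 1) → ℤ) ((i : ℕ) : Fin (p + 3 + 1)) = k' ((i : ℕ) : Fin (p + 2 + 1)) := by
      intro i hi
      have h : ((i : ℕ) : Fin (p + 3 + 1)) = Fin.castSucc ((i : ℕ) : Fin (p + 2 + 1)) :=
        (cast_succ_eq (p + 2) i hi).symm
      rw [h, Fin.snoc_castSucc]
    have hbacklast : (Fin.snoc k' (m (p + 3)) : Fin (p + 3 + 1) → ℤ) ((p + 3 : ℕ) : Fin (p + 3 + 1)) = m (p + 3) := by
      rw [hlastcast]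
      exact Fin.snoc_last _ _
    simp only [Finset.mem_filter, Finset.mem_Icc, Pi.le_def]
    refine ⟨⟨⟨fun j => ?_, fun j => ?_⟩, ?_, ?_, ?_⟩, ?_⟩
    · -- lower bound
      induction j using Fin.lastCases with
      | last => rw [Fin.snoc_last]
      | cast j' =>
        rw [Fin.snoc_castSucc]
        exact le_trans ht.1 (hlo j')
    · -- upper bound
      induction j using Fin.lastCases with
      | last =>
        rw [Fin.snoc_last]
        exact manti 1 (p + 3) (by omega) (by omega) (by omega)
      | cast j' =>
        rw [Fin.snoc_castSucc]
        have := hhi j'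
        rwa [Function.update_of_ne (by omega)] at this
    · rw [hback 0 (by omega)]
      exact hk0
    · exact hbacklast
    · intro i h1 h2
      by_cases hip : i ≤ p + 1
      · rw [hback i (by omega), hback (i + 1) (by omega)]
        have := hcond i h1 (by omega)
        rwa [Function.update_of_ne (by omega)] at this
      · have hi2 : i = p + 2 := by omega
        subst hi2
        constructor
        · rw [hback (p + 2) (by omega), hkn]
          have : (((p + 2 + 1 : ℕ)) : Fin (p + 3 + 1)) = ((p + 3 : ℕ) : Fin (p + 3 + 1)) := rfl
          rw [this, hbacklast]
          exact ht.1
        · rw [hback (p + 2) (by omega), hkn]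
          exact ht.2
    · rw [hback (p + 2) (by omega)]
      exact hkn
  · -- left inverse
    intro k hk
    simp only [Finset.mem_filter, Finset.mem_Icc, Pi.le_def] at hk
    obtain ⟨⟨⟨hlo, hhi⟩, hk0, hklast, hcond⟩, hkt⟩ := hk
    funext j
    induction j using Fin.lastCases with
    | last =>
      simp only [Fin.snoc_last]
      rw [hlastcast] at hklast
      exact hklast.symm
    | cast j' => simp only [Fin.snoc_castSucc]
  · -- right inverse
    intro k' _
    funext j
    exact Fin.snoc_castSucc _ _ _
  · -- term equality
    intro k hk
    simp only [Finset.mem_filter, Finset.mem_Icc, Pi.le_def] at hk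
    obtain ⟨⟨⟨hlo, hhi⟩, hk0, hklast, hcond⟩, hkt⟩ := hk
    have hfwd : ∀ i : ℕ, i < p + 3 →
        k (Fin.castSucc ((i : ℕ) : Fin (p + 2 + 1))) = k ((i : ℕ) : Fin (p + 3 + 1)) :=
      fun i hi => congrArg k (cast_succ_eq (p + 2) i hi)
    simp only [show p + 3 - 1 = p + 2 from rfl, show p + 2 - 1 = p + 1 from rfl]
    rw [prod_split _ (p + 1) (p + 2) rfl (by omega),
        prod_split _ (p + 2) (p + 3) rfl (by omega)]
    have eC : ∀ i ∈ Finset.Icc 1 (p + 1),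
        (Nat.choose (m i - k (((i + 1 : ℕ)) : Fin (p + 3 + 1))).toNat
            (m i - k ((i : ℕ) : Fin (p + 3 + 1))).toNat : ℝ)
        = (Nat.choose (Function.update m (p + 2) t i -
              (fun j : Fin (p + 2 + 1) => k (Fin.castSucc j)) (((i + 1 : ℕ)) : Fin (p + 2 + 1))).toNat
            (Function.update m (p + 2) t i -
              (fun j : Fin (p + 2 + 1) => k (Fin.castSucc j)) ((i : ℕ) : Fin (p + 2 + 1))).toNat : ℝ) := by
      intro i hi
      rw [Finset.mem_Icc] at hi
      simp only
      rw [Function.update_of_ne (by omega), hfwd i (by omega), hfwd (i + 1) (by omega)]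
    have eG : ∀ i ∈ Finset.Icc 1 (p + 2),
        γ i ^ (2 * (k (((i - 1 : ℕ)) : Fin (p + 3 + 1)) - k ((i : ℕ) : Fin (p + 3 + 1))))
        = γ i ^ (2 * ((fun j : Fin (p + 2 + 1) => k (Fin.castSucc j)) (((i - 1 : ℕ)) : Fin (p + 2 + 1))
            - (fun j : Fin (p + 2 + 1) => k (Fin.castSucc j)) ((i : ℕ) : Fin (p + 2 + 1)))) := by
      intro i hi
      rw [Finset.mem_Icc] at hi
      simp only
      rw [hfwd (i - 1) (by omega), hfwd i (by omega)]
    rw [Finset.prod_congr rfl eC, Finset.prod_congr rfl eG]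
    have hCp : (Nat.choose (m (p + 2) - k (((p + 2 + 1 : ℕ)) : Fin (p + 3 + 1))).toNat
        (m (p + 2) - k ((p + 2 : ℕ) : Fin (p + 3 + 1))).toNat : ℝ)
        = (Nat.choose (m (p + 2) - m (p + 3)).toNat (m (p + 2) - t).toNat : ℝ) := by
      have h1 : (((p + 2 + 1 : ℕ)) : Fin (p + 3 + 1)) = ((p + 3 : ℕ) : Fin (p + 3 + 1)) := rfl
      rw [h1, hklast, hkt]
    have hGp : γ (p + 3) ^ (2 * (k (((p + 3 - 1 : ℕ)) : Fin (p + 3 + 1)) - k ((p + 3 : ℕ) : Fin (p + 3 + 1))))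
        = γ (p + 3) ^ (2 * (t - m (p + 3))) := by
      have h1 : (((p + 3 - 1 : ℕ)) : Fin (p + 3 + 1)) = ((p + 2 : ℕ) : Fin (p + 3 + 1)) := rfl
      rw [h1, hklast, hkt]
    rw [hCp, hGp]
    ring

noncomputable def nfRHS (n : ℕ) (γ : ℕ → ℝ) (m : ℕ → ℤ) : ℝ :=
  ∏ i ∈ Finset.Icc 1 (n - 1),
    (∑ j ∈ Finset.Icc 1 (i + 1), γ j ^ 2) ^ (m i - m (i + 1))

lemma sum_split (f : ℕ → ℝ) (b c : ℕ) (h : c = b + 1) :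
    ∑ i ∈ Finset.Icc 1 c, f i = (∑ i ∈ Finset.Icc 1 b, f i) + f c := by
  subst h
  exact Finset.sum_Icc_succ_top (by omega) f

lemma zpow_two_toNat (x : ℝ) (e : ℤ) (he : 0 ≤ e) : x ^ (2 * e) = (x ^ 2) ^ e.toNat := by
  have h : (2 : ℤ) * e = ((2 * e.toNat : ℕ) : ℤ) := by push_cast; omega
  rw [h, zpow_natCast, pow_mul]

lemma zpow_toNat' (x : ℝ) (e : ℤ) (he : 0 ≤ e) : x ^ e = x ^ e.toNat := by
  rw [← zpow_natCast, Int.toNat_of_nonneg he]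

lemma binom_sum (b M : ℤ) (h : b ≤ M) (x y : ℝ) :
    ∑ t ∈ Finset.Icc b M,
      (Nat.choose (M - b).toNat (M - t).toNat : ℝ) * x ^ (t - b).toNat * y ^ (M - t).toNat
      = (x + y) ^ (M - b).toNat := by
  set N := (M - b).toNat with hN
  rw [add_pow]
  refine Finset.sum_nbij' (fun t => (t - b).toNat) (fun s => b + s) ?_ ?_ ?_ ?_ ?_
  · intro t ht
    simp only [Finset.mem_Icc] at ht
    simp only [Finset.mem_range]
    omega
  · intro s hs
    simp only [Finset.mem_range] at hs
    simp only [Finset.mem_Icc]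
    omega
  · intro t ht
    simp only [Finset.mem_Icc] at ht
    omega
  · intro s hs
    simp only [Finset.mem_range] at hs
    omega
  · intro t ht
    simp only [Finset.mem_Icc] at ht
    have h1 : (M - t).toNat = N - (t - b).toNat := by omega
    have h2 : (t - b).toNat ≤ N := by omega
    rw [h1, Nat.choose_symm h2]
    ring

lemma base1 (γ : ℕ → ℝ) (m : ℕ → ℤ) : nfLHS 1 γ m = nfRHS 1 γ m := by
  rw [nfLHS, nfRHS]
  rw [show (1:ℕ) - 1 = 0 from rfl]
  rw [show (Finset.Icc 1 0 : Finset ℕ) = ∅ from rfl]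
  simp only [Finset.prod_empty, one_mul]
  rw [Finset.Icc_self]
  have hfilter : Finset.filter
      (fun k : Fin (1 + 1) → ℤ =>
        k ((0 : ℕ) : Fin (1 + 1)) = m 1 ∧ k ((1 : ℕ) : Fin (1 + 1)) = m 1 ∧
        ∀ i : ℕ, 1 ≤ i → i ≤ 0 →
          k (((i + 1 : ℕ)) : Fin (1 + 1)) ≤ k ((i : ℕ) : Fin (1 + 1)) ∧
          k ((i : ℕ) : Fin (1 + 1)) ≤ m i)
      ({fun _ => m 1} : Finset (Fin (1 + 1) → ℤ)) = {fun _ => m 1} := by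
    refine Finset.filter_true_of_mem ?_
    intro x hx
    rw [Finset.mem_singleton] at hx
    subst hx
    exact ⟨rfl, rfl, fun i h1 h2 => by omega⟩
  rw [hfilter, Finset.sum_singleton]
  simp

lemma base2 (γ : ℕ → ℝ) (m : ℕ → ℤ) (hm : m 2 ≤ m 1) :
    nfLHS 2 γ m = nfRHS 2 γ m := by
  rw [nfLHS, nfRHS]
  rw [show (2:ℕ) - 1 = 1 from rfl]
  have hIcc12 : (Finset.Icc 1 2 : Finset ℕ) = {1, 2} := by decide
  have hS : ∑ j ∈ Finset.Icc 1 2, γ j ^ 2 = γ 1 ^ 2 + γ 2 ^ 2 := by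
    rw [hIcc12, Finset.sum_insert (by decide), Finset.sum_singleton]
  rw [Finset.Icc_self, Finset.prod_singleton, hS]
  rw [zpow_toNat' _ _ (by omega : (0:ℤ) ≤ m 1 - m 2)]
  rw [show γ 1 ^ 2 + γ 2 ^ 2 = γ 2 ^ 2 + γ 1 ^ 2 from add_comm _ _]
  rw [← binom_sum (m 2) (m 1) hm (γ 2 ^ 2) (γ 1 ^ 2)]
  have c0 : ((0 : ℕ) : Fin (2 + 1)) = (0 : Fin 3) := by decide
  have c1 : ((1 : ℕ) : Fin (2 + 1)) = (1 : Fin 3) := by decide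
  have c2 : ((2 : ℕ) : Fin (2 + 1)) = (2 : Fin 3) := by decide
  refine Finset.sum_nbij'
    (fun k : Fin (2 + 1) → ℤ => k ((1 : ℕ) : Fin (2 + 1)))
    (fun t : ℤ => fun j : Fin (2 + 1) => if (j : ℕ) = 0 then m 1 else if (j : ℕ) = 1 then t else m 2)
    ?_ ?_ ?_ ?_ ?_
  · intro k hk
    simp only [Finset.mem_filter, Finset.mem_Icc, Pi.le_def] at hk
    obtain ⟨⟨hlo, hhi⟩, hk0, hk2, hcond⟩ := hk
    have h1 := (hcond 1 (by omega) (by omega)).2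
    exact Finset.mem_Icc.2 ⟨hlo _, h1⟩
  · intro t ht
    rw [Finset.mem_Icc] at ht
    simp only [Finset.mem_filter, Finset.mem_Icc, Pi.le_def]
    refine ⟨⟨fun j => ?_, fun j => ?_⟩, ?_, ?_, ?_⟩
    · fin_cases j <;> simp <;> omega
    · fin_cases j <;> simp <;> omega
    · rw [c0]; norm_num
    · rw [c2]; norm_num
    · intro i h1 h2
      have : i = 1 := by omega
      subst this
      rw [c1, show ((1 + 1 : ℕ) : Fin (2 + 1)) = (2 : Fin 3) from by decide]
      norm_num
      exact ⟨ht.1, ht.2⟩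
  · intro k hk
    simp only [Finset.mem_filter, Finset.mem_Icc, Pi.le_def] at hk
    obtain ⟨⟨hlo, hhi⟩, hk0, hk2, hcond⟩ := hk
    funext j
    fin_cases j
    · simpa using hk0.symm
    · simp
    · simpa using hk2.symm
  · intro t ht
    simp
  · intro k hk
    simp only [Finset.mem_filter, Finset.mem_Icc, Pi.le_def] at hk
    obtain ⟨⟨hlo, hhi⟩, hk0, hk2, hcond⟩ := hk
    have hT1 := (hcond 1 (by omega) (by omega)).2
    have hT2 := hlo ((1 : ℕ) : Fin (2 + 1))
    beta_reduce
    rw [Finset.prod_singleton, hIcc12,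
        Finset.prod_insert (by decide), Finset.prod_singleton]
    rw [show ((1 + 1 : ℕ) : Fin (2 + 1)) = ((2 : ℕ) : Fin (2 + 1)) from rfl]
    rw [show ((1 - 1 : ℕ) : Fin (2 + 1)) = ((0 : ℕ) : Fin (2 + 1)) from rfl]
    rw [show ((2 - 1 : ℕ) : Fin (2 + 1)) = ((1 : ℕ) : Fin (2 + 1)) from rfl]
    rw [hk0, hk2]
    rw [zpow_two_toNat _ _ (by omega : (0:ℤ) ≤ m 1 - k ((1:ℕ) : Fin (2+1)))]
    rw [zpow_two_toNat _ _ (by omega : (0:ℤ) ≤ k ((1:ℕ) : Fin (2+1)) - m 2)]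
    ring

lemma key (γ : ℕ → ℝ) : ∀ N : ℕ, ∀ m : ℕ → ℤ,
    (∀ i, 1 ≤ i → i ≤ N + 1 → 0 < γ i) →
    (∀ i, 1 ≤ i → i < N + 1 → m (i + 1) ≤ m i) →
    nfLHS (N + 1) γ m = nfRHS (N + 1) γ m := by
  intro N
  induction N with
  | zero => intro m _ _; exact base1 γ m
  | succ K ih =>
    intro m hγ hm
    cases K with
    | zero => exact base2 γ m (hm 1 (by omega) (by omega))
    | succ J =>
      have hS : (0:ℝ) < ∑ l ∈ Finset.Icc 1 (J + 2), γ l ^ 2 := by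
        refine Finset.sum_pos (fun l hl => ?_) ⟨1, by simp⟩
        rw [Finset.mem_Icc] at hl
        exact pow_pos (hγ l hl.1 (by omega)) 2
      have hSS : ∑ l ∈ Finset.Icc 1 (J + 3), γ l ^ 2
          = γ (J + 3) ^ 2 + ∑ l ∈ Finset.Icc 1 (J + 2), γ l ^ 2 := by
        rw [sum_split _ (J + 2) (J + 3) rfl]; ring
      have hm32 : m (J + 3) ≤ m (J + 2) := hm (J + 2) (by omega) (by omega)
      have hstep : nfLHS (J + 1 + 1 + 1) γ m = nfLHS (J + 3) γ m := rfl
      rw [hstep, peel J γ m (fun i h1 h2 => hm i h1 (by omega))]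
      have hinner : ∀ t ∈ Finset.Icc (m (J + 3)) (m (J + 2)),
          (Nat.choose (m (J + 2) - m (J + 3)).toNat (m (J + 2) - t).toNat : ℝ) *
            γ (J + 3) ^ (2 * (t - m (J + 3))) *
            nfLHS (J + 2) γ (Function.update m (J + 2) t)
          = ((∏ i ∈ Finset.Icc 1 J,
                (∑ j ∈ Finset.Icc 1 (i + 1), γ j ^ 2) ^ (m i - m (i + 1))) *
              (∑ l ∈ Finset.Icc 1 (J + 2), γ l ^ 2) ^ (m (J + 1) - m (J + 2))) *
            ((Nat.choose (m (J + 2) - m (J + 3)).toNat (m (J + 2) - t).toNat : ℝ) *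
              (γ (J + 3) ^ 2) ^ (t - m (J + 3)).toNat *
              (∑ l ∈ Finset.Icc 1 (J + 2), γ l ^ 2) ^ (m (J + 2) - t).toNat) := by
        intro t ht
        rw [Finset.mem_Icc] at ht
        have hupd : nfLHS (J + 1 + 1) γ (Function.update m (J + 2) t)
            = nfRHS (J + 2) γ (Function.update m (J + 2) t) := by
          refine ih (Function.update m (J + 2) t) (fun i h1 h2 => hγ i h1 (by omega)) ?_
          intro i h1 h2
          by_cases hi : i + 1 = J + 2
          · rw [hi, Function.update_self, Function.update_of_ne (by omega)]
            have : m (J + 2) ≤ m i := by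
              have := anti_of_step m (J + 3) (fun a b c => hm a b (by omega)) i (J + 2)
                h1 (by omega) (by omega)
              exact this
            omega
          · rw [Function.update_of_ne (by omega), Function.update_of_ne (by omega)]
            exact hm i h1 (by omega)
        rw [show nfLHS (J + 2) γ (Function.update m (J + 2) t)
              = nfLHS (J + 1 + 1) γ (Function.update m (J + 2) t) from rfl, hupd]
        rw [nfRHS]
        rw [show (J + 2 : ℕ) - 1 = J + 1 from rfl]
        rw [prod_split _ J (J + 1) rfl (by omega)]
        have hprodeq : ∀ i ∈ Finset.Icc 1 J,
            (∑ j ∈ Finset.Icc 1 (i + 1), γ j ^ 2) ^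
                (Function.update m (J + 2) t i - Function.update m (J + 2) t (i + 1))
            = (∑ j ∈ Finset.Icc 1 (i + 1), γ j ^ 2) ^ (m i - m (i + 1)) := by
          intro i hi
          rw [Finset.mem_Icc] at hi
          rw [Function.update_of_ne (by omega), Function.update_of_ne (by omega)]
        rw [Finset.prod_congr rfl hprodeq]
        rw [Function.update_of_ne (by omega : J + 1 ≠ J + 2), Function.update_self]
        rw [show m (J + 1) - t = (m (J + 1) - m (J + 2)) + (m (J + 2) - t) by ring]
        rw [zpow_add₀ hS.ne']
        rw [zpow_toNat' _ (m (J + 2) - t) (by omega)]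
        rw [zpow_two_toNat _ _ (by omega : (0:ℤ) ≤ t - m (J + 3))]
        ring
      rw [Finset.sum_congr rfl hinner, ← Finset.mul_sum]
      have hb : ∑ t ∈ Finset.Icc (m (J + 3)) (m (J + 2)),
          (Nat.choose (m (J + 2) - m (J + 3)).toNat (m (J + 2) - t).toNat : ℝ) *
            (γ (J + 3) ^ 2) ^ (t - m (J + 3)).toNat *
            (∑ l ∈ Finset.Icc 1 (J + 2), γ l ^ 2) ^ (m (J + 2) - t).toNat
          = (γ (J + 3) ^ 2 + ∑ l ∈ Finset.Icc 1 (J + 2), γ l ^ 2) ^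
              (m (J + 2) - m (J + 3)).toNat :=
        binom_sum (m (J + 3)) (m (J + 2)) hm32 _ _
      rw [hb, ← hSS]
      rw [nfRHS]
      rw [show (J + 1 + 1 + 1 : ℕ) - 1 = J + 2 from rfl]
      rw [prod_split _ (J + 1) (J + 2) rfl (by omega),
          prod_split _ J (J + 1) rfl (by omega)]
      rw [show (J + 1 + 1 : ℕ) = J + 2 from rfl, show (J + 2 + 1 : ℕ) = J + 3 from rfl]
      rw [zpow_toNat' (∑ l ∈ Finset.Icc 1 (J + 3), γ l ^ 2) (m (J + 2) - m (J + 3)) (by omega)]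
      try ring

/-- The normalization identity for the new highest weight vector: for positive reals
`γ₁,…,γₙ` and integers `m₁ ≥ m₂ ≥ ⋯ ≥ mₙ`, the nested sum
`∑_{k_{n-1}=m_n}^{m_{n-1}} ⋯ ∑_{k_1=k_2}^{m_1} ∏_i C(m_i-k_{i+1}, m_i-k_i) ·
∏_i γ_i^{2(k_{i-1}-k_i)}` (with the conventions `k_0 = m_1`, `k_n = m_n`) equals
`∏_{i=1}^{n-1} (γ₁²+⋯+γ_{i+1}²)^{m_i - m_{i+1}}`. -/
theorem norm_factor_identity (n : ℕ) (hn : 1 ≤ n) (γ : ℕ → ℝ)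
    (hγ : ∀ i, 1 ≤ i → i ≤ n → 0 < γ i)
    (m : ℕ → ℤ) (hm : ∀ i, 1 ≤ i → i < n → m (i + 1) ≤ m i) :
    ∑ k ∈ Finset.filter
        (fun k : Fin (n + 1) → ℤ =>
          k ((0 : ℕ) : Fin (n + 1)) = m 1 ∧ k ((n : ℕ) : Fin (n + 1)) = m n ∧
          ∀ i : ℕ, 1 ≤ i → i ≤ n - 1 →
            k (((i + 1 : ℕ)) : Fin (n + 1)) ≤ k ((i : ℕ) : Fin (n + 1)) ∧
            k ((i : ℕ) : Fin (n + 1)) ≤ m i)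
        (Finset.Icc (fun _ => m n) (fun _ => m 1)),
      ((∏ i ∈ Finset.Icc 1 (n - 1),
          (Nat.choose (m i - k (((i + 1 : ℕ)) : Fin (n + 1))).toNat
            (m i - k ((i : ℕ) : Fin (n + 1))).toNat : ℝ)) *
        ∏ i ∈ Finset.Icc 1 n,
          γ i ^ (2 * (k (((i - 1 : ℕ)) : Fin (n + 1)) - k ((i : ℕ) : Fin (n + 1)))))
      = ∏ i ∈ Finset.Icc 1 (n - 1),
          (∑ j ∈ Finset.Icc 1 (i + 1), γ j ^ 2) ^ (m i - m (i + 1)) := by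
  obtain ⟨N, rfl⟩ : ∃ N, n = N + 1 := ⟨n - 1, by omega⟩
  exact key γ N m hγ hm
end

section
/- Fock representation of gl(1|n): Let p > n−1 be a real number, and let W(p) be the complex vector space with orthonormal basis w(φ) indexed by φ ∈ {0,1}^n, with operators defined by e_{00} w(φ) = (p−|φ|) w(φ), e_{kk} w(φ) = φ_k w(φ), e_{k0} w(φ) = (1−φ_k)(−1)^{φ_1+···+φ_{k−1}} √(p−|φ|) w(φ + δ_k), e_{0k} w(φ) = φ_k (−1)^{φ_1+···+φ_{k−1}} √(p−|φ|+1) w(φ − δ_k). Then {e_{k0}, e_{0k}} = e_{00} + e_{kk} as operators on W(p). -/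
/-- In the Fock representation `W(p)` of `gl(1|n)` (with `p > n-1`), where the operators
act on the orthonormal basis `w(φ)`, `φ ∈ {0,1}ⁿ`, by the stated formulas, one has
`{e_{k0}, e_{0k}} = e_{00} + e_{kk}` as operators on `W(p)`. -/
theorem fock_anticommutator_identity {W : Type*} [AddCommGroup W] [Module ℂ W]
    {n : ℕ} (p : ℝ) (hp : (n : ℝ) - 1 < p)
    (b : Module.Basis (Fin n → Fin 2) ℂ W) (w : (Fin n → Fin 2) → W) (hw : w = ⇑b)
    (e00 : W →ₗ[ℂ] W) (ekk ek0 e0k : Fin n → (W →ₗ[ℂ] W))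
    (h00 : ∀ φ, e00 (w φ) = ((p - ∑ i, (φ i : ℕ) : ℝ) : ℂ) • w φ)
    (hkk : ∀ k φ, ekk k (w φ) = ((φ k : ℕ) : ℂ) • w φ)
    (hk0 : ∀ k φ, ek0 k (w φ) =
      if φ k = 0 then
        (((-1 : ℝ) ^ (∑ i ∈ Finset.univ.filter (fun i => i < k), (φ i : ℕ)) *
            Real.sqrt (p - ∑ i, (φ i : ℕ)) : ℝ) : ℂ) • w (Function.update φ k 1)
      else 0)
    (h0k : ∀ k φ, e0k k (w φ) =
      if φ k = 1 then
        (((-1 : ℝ) ^ (∑ i ∈ Finset.univ.filter (fun i => i < k), (φ i : ℕ)) *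
            Real.sqrt (p - (∑ i, (φ i : ℕ)) + 1) : ℝ) : ℂ) • w (Function.update φ k 0)
      else 0) :
    ∀ k, ek0 k ∘ₗ e0k k + e0k k ∘ₗ ek0 k = e00 + ekk k := by
  subst hw
  intro k
  have hn : 0 < n := k.pos
  apply b.ext
  intro φ
  -- sum over the erased set
  set E : ℕ := ∑ i ∈ Finset.univ.erase k, ((φ i : ℕ)) with hE
  have hS : (∑ i, ((φ i : ℕ))) = (φ k : ℕ) + E := by
    rw [hE]; exact (Finset.add_sum_erase _ (fun i => ((φ i : ℕ))) (Finset.mem_univ k)).symm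
  have hEle : E ≤ n - 1 := by
    calc E ≤ ∑ i ∈ Finset.univ.erase k, 1 :=
      Finset.sum_le_sum (fun i _ => Fin.is_le (φ i))
    _ = n - 1 := by simp [Finset.card_erase_of_mem]
  have hEleR : (E : ℝ) ≤ (n : ℝ) - 1 := by
    have : ((n - 1 : ℕ) : ℝ) = (n : ℝ) - 1 := by
      push_cast [Nat.cast_sub hn]; ring
    calc (E : ℝ) ≤ ((n - 1 : ℕ) : ℝ) := by exact_mod_cast hEle
    _ = (n : ℝ) - 1 := this
  have hsum_update : ∀ (v : Fin 2), (∑ i, ((Function.update φ k v i : ℕ))) = (v : ℕ) + E := by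
    intro v
    have : (fun i => ((Function.update φ k v i : ℕ))) =
        Function.update (fun i => ((φ i : ℕ))) k (v : ℕ) := by
      ext i
      by_cases h : i = k <;> simp [Function.update_apply, h]
    rw [this, Finset.sum_update_of_mem (Finset.mem_univ k)]
    simp [hE, Finset.sdiff_singleton_eq_erase]
  have hsign_update : ∀ (v : Fin 2),
      (∑ i ∈ Finset.univ.filter (fun i => i < k), ((Function.update φ k v i : ℕ))) =
      ∑ i ∈ Finset.univ.filter (fun i => i < k), ((φ i : ℕ)) := by
    intro v
    refine Finset.sum_congr rfl (fun i hi => ?_)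
    have : i ≠ k := ne_of_lt (Finset.mem_filter.mp hi).2
    rw [Function.update_of_ne this]
  set s : ℕ := ∑ i ∈ Finset.univ.filter (fun i => i < k), ((φ i : ℕ)) with hs
  simp only [LinearMap.add_apply, LinearMap.comp_apply]
  have hsq : ((-1 : ℝ) ^ s) * ((-1 : ℝ) ^ s) = 1 := by
    rw [← pow_add]
    exact Even.neg_one_pow ⟨s, rfl⟩
  have h2 : φ k = 0 ∨ φ k = 1 := by
    rcases hv : φ k with ⟨_ | _ | m, hm⟩
    · left; rfl
    · right; rfl
    · omega
  rcases h2 with h0 | h1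
  · -- φ k = 0
    have hu1 : Function.update φ k (1 : Fin 2) k = 1 := Function.update_self _ _ _
    have hback : Function.update (Function.update φ k 1) k 0 = φ := by
      rw [Function.update_idem, ← h0, Function.update_eq_self]
    have hnonneg : (0 : ℝ) ≤ p - E := by linarith
    rw [h0k k φ, if_neg (by simp [h0]), map_zero, zero_add,
        hk0 k φ, if_pos h0, map_smul, h0k k (Function.update φ k 1),
        if_pos hu1, hback, h00, hkk, h0]
    rw [smul_smul, ← add_smul]
    congr 1
    rw [hsign_update, hsum_update, hS, h0]
    push_cast [Fin.val_zero, Fin.val_one]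
    rw [← hs]
    rw [show (p - (1 + (E : ℝ)) + 1 : ℝ) = p - E by ring,
        show (p - (0 + (E : ℝ)) : ℝ) = p - E by ring]
    have hsqC : ((Real.sqrt (p - E) : ℂ)) * (Real.sqrt (p - E) : ℂ) = (p : ℂ) - E := by
      rw [← Complex.ofReal_mul, Real.mul_self_sqrt hnonneg]
      push_cast; ring
    have hsqC' : ((-1 : ℂ) ^ s) * ((-1 : ℂ) ^ s) = 1 := by
      rw [← pow_add]; exact Even.neg_one_pow ⟨s, rfl⟩
    linear_combination ((Real.sqrt (p - E) : ℂ) * (Real.sqrt (p - E) : ℂ)) * hsqC' + hsqC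
  · -- φ k = 1
    have hu0 : Function.update φ k (0 : Fin 2) k = 0 := Function.update_self _ _ _
    have hback : Function.update (Function.update φ k 0) k 1 = φ := by
      rw [Function.update_idem, ← h1, Function.update_eq_self]
    have hnonneg : (0 : ℝ) ≤ p - E := by linarith
    rw [hk0 k φ, if_neg (by simp [h1]), map_zero, add_zero,
        h0k k φ, if_pos h1, map_smul, hk0 k (Function.update φ k 0),
        if_pos hu0, hback, h00, hkk, h1]
    rw [smul_smul, ← add_smul]
    congr 1
    rw [hsign_update, hsum_update, hS, h1]
    push_cast [Fin.val_zero, Fin.val_one]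
    rw [← hs]
    rw [show (p - (1 + (E : ℝ)) + 1 : ℝ) = p - E by ring,
        show (p - (0 + (E : ℝ)) : ℝ) = p - E by ring]
    have hsqC : ((Real.sqrt (p - E) : ℂ)) * (Real.sqrt (p - E) : ℂ) = (p : ℂ) - E := by
      rw [← Complex.ofReal_mul, Real.mul_self_sqrt hnonneg]
      push_cast; ring
    have hsqC' : ((-1 : ℂ) ^ s) * ((-1 : ℂ) ^ s) = 1 := by
      rw [← pow_add]; exact Even.neg_one_pow ⟨s, rfl⟩
    linear_combination ((Real.sqrt (p - E) : ℂ) * (Real.sqrt (p - E) : ℂ)) * hsqC' + hsqC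
end
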